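/- Let g ∈ L¹(Γ × S¹) satisfy the symmetry relation g(e^{iβ}, e^{iθ}) = g(e^{i(2θ−β−π)}, e^{i(θ+π)}) for almost every (e^{iβ}, e^{iθ}) ∈ Γ × S¹. Then its Fourier coefficients satisfy g_{n,k} = (−1)^{n+k} g_{n+2k,−k} for all n, k ∈ ℤ. -/

import Mathlib

/-
The map `T (β, θ) = (2θ - β - π, θ + π)` of the torus is, for fixed `θ`, a reflection in `β`
followed by a translation in `θ`; both preserve integrals of doubly `2π`-periodic functions over
a period square. The symmetry of `g` therefore lets us replace `g` by `g ∘ T` in the integral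
defining `g_{n,k}`, and the character `e^{-inθ} e^{-ikβ}` pulled back along `T⁻¹` is the
character of index `(n + 2k, -k)` times the constant `(-1)^{n+k}`.
-/

open MeasureTheory Filter Set

noncomputable section

/-- Fourier coefficients of a function on the torus `Γ × S¹`. -/
def fcoef (g : ℝ → ℝ → ℂ) (n k : ℤ) : ℂ :=
  (1 / (2 * Real.pi) ^ 2 : ℂ) *
    ∫ β in Ioc (-Real.pi) Real.pi,
      ∫ θ in Ioc (-Real.pi) Real.pi,
        g β θ * Complex.exp (-Complex.I * (n : ℂ) * (θ : ℂ)) *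
          Complex.exp (-Complex.I * (k : ℂ) * (β : ℂ))

section

variable {E : Type*} [NormedAddCommGroup E] [NormedSpace ℝ E]

namespace Function.Periodic

variable {f : ℝ → E} {T : ℝ}

theorem intervalIntegral_comp_add_right_eq (hf : Periodic f T) (t s : ℝ) :
    ∫ x in t..t + T, f (x + s) = ∫ x in t..t + T, f x := by
  rw [intervalIntegral.integral_comp_add_right, add_right_comm, hf.intervalIntegral_add_eq]

theorem intervalIntegral_comp_sub_left_eq (hf : Periodic f T) (t c : ℝ) :
    ∫ x in t..t + T, f (c - x) = ∫ x in t..t + T, f x := by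
  rw [intervalIntegral.integral_comp_sub_left, show c - t = c - (t + T) + T by ring,
    hf.intervalIntegral_add_eq]

end Function.Periodic

theorem intervalIntegral_intervalIntegral_comp_sub_left_add_right {F : ℝ → ℝ → E} {S T : ℝ}
    (hF₁ : ∀ y, Function.Periodic (F · y) S) (hF₂ : ∀ x, Function.Periodic (F x) T)
    (c : ℝ → ℝ) (d a b : ℝ) :
    ∫ y in b..b + T, ∫ x in a..a + S, F (c y - x) (y + d) =
      ∫ y in b..b + T, ∫ x in a..a + S, F x y := by
  have hG : Function.Periodic (fun y => ∫ x in a..a + S, F x y) T := fun y => by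
    simp only [hF₂ _ y]
  simp only [(hF₁ _).intervalIntegral_comp_sub_left_eq]
  exact hG.intervalIntegral_comp_add_right_eq b d

end

theorem Complex.exp_neg_I_mul_add_two_pi (m : ℤ) (x : ℝ) :
    Complex.exp (-Complex.I * m * ↑(x + 2 * Real.pi)) = Complex.exp (-Complex.I * m * x) := by
  rw [show -Complex.I * m * ↑(x + 2 * Real.pi) =
      -Complex.I * m * x + ↑(-m) * (2 * Real.pi * Complex.I) by push_cast; ring,
    Complex.exp_add, Complex.exp_int_mul_two_pi_mul_I, mul_one]

def fcoefIntegrand (g : ℝ → ℝ → ℂ) (n k : ℤ) (β θ : ℝ) : ℂ :=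
  g β θ * Complex.exp (-Complex.I * (n : ℂ) * (θ : ℂ)) *
    Complex.exp (-Complex.I * (k : ℂ) * (β : ℂ))

section

variable {g : ℝ → ℝ → ℂ}

theorem fcoefIntegrand_periodic_left
    (hg : ∀ β θ : ℝ, g (β + 2 * Real.pi) θ = g β θ) (n k : ℤ) (θ : ℝ) :
    Function.Periodic (fcoefIntegrand g n k · θ) (2 * Real.pi) := fun β => by
  simp only [fcoefIntegrand, hg, Complex.exp_neg_I_mul_add_two_pi]

theorem fcoefIntegrand_periodic_right
    (hg : ∀ β θ : ℝ, g β (θ + 2 * Real.pi) = g β θ) (n k : ℤ) (β : ℝ) :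
    Function.Periodic (fcoefIntegrand g n k β) (2 * Real.pi) := fun θ => by
  simp only [fcoefIntegrand, hg, Complex.exp_neg_I_mul_add_two_pi]

theorem integrableOn_fcoefIntegrand
    (hg : IntegrableOn (fun q : ℝ × ℝ => g q.1 q.2)
      (Ioc (-Real.pi) Real.pi ×ˢ Ioc (-Real.pi) Real.pi)) (n k : ℤ) :
    IntegrableOn (fun q : ℝ × ℝ => fcoefIntegrand g n k q.1 q.2)
      (Ioc (-Real.pi) Real.pi ×ˢ Ioc (-Real.pi) Real.pi) := by
  have hexp : ContinuousOn (fun q : ℝ × ℝ => Complex.exp (-Complex.I * (n : ℂ) * (q.2 : ℂ)) *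
      Complex.exp (-Complex.I * (k : ℂ) * (q.1 : ℂ)))
      (Icc (-Real.pi) Real.pi ×ˢ Icc (-Real.pi) Real.pi) := by
    fun_prop
  simpa only [fcoefIntegrand, mul_assoc] using hg.mul_continuousOn_of_subset hexp
    (measurableSet_Ioc.prod measurableSet_Ioc) (isCompact_Icc.prod isCompact_Icc)
    (prod_mono Ioc_subset_Icc_self Ioc_subset_Icc_self)

theorem fcoef_eq_intervalIntegral_intervalIntegral
    (hg : IntegrableOn (fun q : ℝ × ℝ => g q.1 q.2)
      (Ioc (-Real.pi) Real.pi ×ˢ Ioc (-Real.pi) Real.pi)) (n k : ℤ) :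
    fcoef g n k = (1 / (2 * Real.pi) ^ 2 : ℂ) *
      ∫ θ in -Real.pi..Real.pi, ∫ β in -Real.pi..Real.pi, fcoefIntegrand g n k β θ := by
  have hint := integrableOn_fcoefIntegrand hg n k
  rw [IntegrableOn, Measure.volume_eq_prod, ← Measure.prod_restrict] at hint
  simp only [intervalIntegral.integral_of_le (neg_le_self Real.pi_pos.le)]
  exact congrArg _ (integral_integral_swap hint)

theorem fcoefIntegrand_eq_neg_one_zpow_mul {n k : ℤ} {β θ : ℝ}
    (h : g β θ = g (2 * θ - Real.pi - β) (θ + Real.pi)) :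
    fcoefIntegrand g n k β θ = (-1 : ℂ) ^ (n + k) *
      fcoefIntegrand g (n + 2 * k) (-k) (2 * θ - Real.pi - β) (θ + Real.pi) := by
  have hsign : (-1 : ℂ) ^ (n + k) = Complex.exp (↑(n + 3 * k) * (Real.pi * Complex.I)) := by
    rw [Complex.exp_int_mul, Complex.exp_pi_mul_I, show n + 3 * k = n + k + 2 * k by ring,
      zpow_add₀ (by norm_num) (n + k), zpow_mul]
    norm_num
  have hexp : Complex.exp (-Complex.I * n * θ) * Complex.exp (-Complex.I * k * β) =
      Complex.exp (↑(n + 3 * k) * (Real.pi * Complex.I)) *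
        (Complex.exp (-Complex.I * ↑(n + 2 * k) * ↑(θ + Real.pi)) *
          Complex.exp (-Complex.I * ↑(-k) * ↑(2 * θ - Real.pi - β))) := by
    simp only [← Complex.exp_add]
    congr 1
    push_cast
    ring
  rw [fcoefIntegrand, fcoefIntegrand, h, hsign, mul_assoc, hexp]
  ring

end

/-- Lemma A.2: the symmetry `g(e^{iβ}, e^{iθ}) = g(e^{i(2θ-β-π)}, e^{i(θ+π)})` (a.e.)
implies `g_{n,k} = (-1)^{n+k} g_{n+2k,-k}` for all `n, k ∈ ℤ`. -/
theorem stmt11 (g : ℝ → ℝ → ℂ)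
    (hgper : ∀ β θ : ℝ, g (β + 2 * Real.pi) θ = g β θ ∧ g β (θ + 2 * Real.pi) = g β θ)
    (hgint : IntegrableOn (fun q : ℝ × ℝ => g q.1 q.2)
      (Ioc (-Real.pi) Real.pi ×ˢ Ioc (-Real.pi) Real.pi))
    (hgsym : ∀ᵐ q : ℝ × ℝ, g q.1 q.2 = g (2 * q.2 - q.1 - Real.pi) (q.2 + Real.pi)) :
    ∀ n k : ℤ, fcoef g n k = (-1 : ℂ) ^ (n + k) * fcoef g (n + 2 * k) (-k) := by
  intro n k
  have hsym : ∀ᵐ θ : ℝ, ∀ᵐ β : ℝ, g β θ = g (2 * θ - Real.pi - β) (θ + Real.pi) := by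
    rw [Measure.volume_eq_prod ℝ ℝ] at hgsym
    simp only [sub_right_comm _ _ Real.pi] at hgsym
    exact Measure.ae_ae_of_ae_prod
      ((Measure.measurePreserving_swap (μ := volume) (ν := volume)).quasiMeasurePreserving.ae hgsym)
  have hshear := intervalIntegral_intervalIntegral_comp_sub_left_add_right
    (fcoefIntegrand_periodic_left (fun β θ => (hgper β θ).1) (n + 2 * k) (-k))
    (fcoefIntegrand_periodic_right (fun β θ => (hgper β θ).2) (n + 2 * k) (-k))
    (fun θ => 2 * θ - Real.pi) Real.pi (-Real.pi) (-Real.pi)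
  rw [show -Real.pi + 2 * Real.pi = Real.pi by ring] at hshear
  rw [fcoef_eq_intervalIntegral_intervalIntegral hgint,
    fcoef_eq_intervalIntegral_intervalIntegral hgint, ← hshear, mul_left_comm]
  congr 1
  rw [← intervalIntegral.integral_const_mul]
  refine intervalIntegral.integral_congr_ae (hsym.mono fun θ hθ _ => ?_)
  rw [← intervalIntegral.integral_const_mul]
  exact intervalIntegral.integral_congr_ae (hθ.mono fun β hβ _ =>
    fcoefIntegrand_eq_neg_one_zpow_mul hβ)
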